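/- Let u be a regular form, Φ (monic), Ψ, B polynomials, and c a zero of Φ. Write Φ(x) = (x − c)Φ_c(x), qΨ(x) + Φ_c(x) = (x − cq)Ψ_{cq}(x) + r_{cq}, and qB(x) = (x − cq)B_{cq}(x) + b_{cq}. Then H_q(Φ u) + Ψ u + B(x^{-1} u (h_q u)) = 0 holds if and only if H_q(Φ_c u) + Ψ_{cq} u + B_{cq}(x^{-1} u (h_q u)) + r_{cq}(x − cq)^{-1} u + b_{cq}(x − cq)^{-1}(x^{-1} u (h_q u)) − {⟨u, Ψ_{cq}⟩ + ⟨x^{-1} u (h_q u), B_{cq}⟩} δ_{cq} = 0. -/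

import Mathlib

open Polynomial

noncomputable section

namespace QLH

/-- A *form*: a linear functional on ℂ[x]. -/
abbrev PForm : Type := Polynomial ℂ →ₗ[ℂ] ℂ

private lemma divByMonic_add (d f g : Polynomial ℂ) (hd : d.Monic) :
    (f + g) /ₘ d = f /ₘ d + g /ₘ d := by
  apply mul_left_cancel₀ hd.ne_zero
  have h1 : d * (f /ₘ d) = f - f %ₘ d := by
    rw [Polynomial.modByMonic_eq_sub_mul_div f d]; ring
  have h2 : d * (g /ₘ d) = g - g %ₘ d := by
    rw [Polynomial.modByMonic_eq_sub_mul_div g d]; ring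
  have h3 : d * ((f + g) /ₘ d) = (f + g) - (f + g) %ₘ d := by
    rw [Polynomial.modByMonic_eq_sub_mul_div (f + g) d]; ring
  rw [mul_add, h1, h2, h3, Polynomial.add_modByMonic]
  ring

private lemma divByMonic_smul (d f : Polynomial ℂ) (a : ℂ) (hd : d.Monic) :
    (a • f) /ₘ d = a • (f /ₘ d) := by
  apply mul_left_cancel₀ hd.ne_zero
  have h1 : d * (f /ₘ d) = f - f %ₘ d := by
    rw [Polynomial.modByMonic_eq_sub_mul_div f d]; ring
  have h3 : d * ((a • f) /ₘ d) = (a • f) - (a • f) %ₘ d := by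
    rw [Polynomial.modByMonic_eq_sub_mul_div (a • f) d]; ring
  rw [h3, Polynomial.smul_modByMonic, mul_smul_comm, h1, smul_sub]

/-- `(h_a f)(x) = f (a x)`. -/
def hP (a : ℂ) : Polynomial ℂ →ₗ[ℂ] Polynomial ℂ :=
  (Polynomial.aeval (Polynomial.C a * Polynomial.X : Polynomial ℂ)).toLinearMap

/-- `(θ_c f)(x) = (f(x) - f(c))/(x - c)`. -/
def thetaP (c : ℂ) : Polynomial ℂ →ₗ[ℂ] Polynomial ℂ where
  toFun f := (f - C (f.eval c)) /ₘ (X - C c)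
  map_add' f g := by
    try dsimp only
    have h : f + g - C ((f + g).eval c)
        = (f - C (f.eval c)) + (g - C (g.eval c)) := by
      simp only [eval_add, C_add]; ring
    rw [h, divByMonic_add _ _ _ (monic_X_sub_C c)]
  map_smul' a f := by
    try dsimp only
    have h : a • f - C ((a • f).eval c) = a • (f - C (f.eval c)) := by
      simp only [eval_smul, smul_eq_mul, smul_sub, Polynomial.smul_C]
    rw [h, divByMonic_smul _ _ _ (monic_X_sub_C c)]
    rfl

/-- `(H_q f)(x) = (f(qx) - f(x))/((q-1)x)`. -/
def HqP (q : ℂ) : Polynomial ℂ →ₗ[ℂ] Polynomial ℂ :=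
  (q - 1)⁻¹ • (thetaP 0 ∘ₗ (hP q - LinearMap.id))

/-- `⟨h_a u, f⟩ = ⟨u, h_a f⟩`. -/
def hF (a : ℂ) (u : PForm) : PForm := u ∘ₗ hP a

/-- `⟨H_q u, f⟩ = -⟨u, H_q f⟩`. -/
def HqF (q : ℂ) (u : PForm) : PForm := -(u ∘ₗ HqP q)

/-- `⟨g u, f⟩ = ⟨u, g f⟩`. -/
def mF (g : Polynomial ℂ) (u : PForm) : PForm := u ∘ₗ LinearMap.mulLeft ℂ g

/-- `⟨(x - c)⁻¹ u, f⟩ = ⟨u, θ_c f⟩`. -/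
def divF (c : ℂ) (u : PForm) : PForm := u ∘ₗ thetaP c

/-- The Dirac form `δ_c`. -/
def deltaF (c : ℂ) : PForm := Polynomial.leval c

/-- Kernel used in the left product of a form by a polynomial. -/
def kern (u : PForm) (j : ℕ) : Polynomial ℂ :=
  ∑ i ∈ Finset.range (j + 1), C (u (X ^ (j - i))) * X ^ i

/-- The left product `f ↦ u f`, `(uf)(x) = ⟨u_ζ, (x f(x) - ζ f(ζ))/(x - ζ)⟩`. -/
def lmul (u : PForm) : Polynomial ℂ →ₗ[ℂ] Polynomial ℂ where
  toFun f := f.sum fun j a => a • kern u j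
  map_add' f g :=
    Polynomial.sum_add_index f g _ (fun i => zero_smul ℂ _) fun i b₁ b₂ => add_smul b₁ b₂ _
  map_smul' a f := by
    try dsimp only
    rw [Polynomial.sum_smul_index f a (fun j b => b • kern u j) fun i => zero_smul ℂ _]
    simp only [Polynomial.sum_def, mul_smul, ← Finset.smul_sum]
    rfl

/-- The Cauchy product of two forms: `⟨uv, f⟩ = ⟨u, v f⟩`. -/
def cF (u v : PForm) : PForm := u ∘ₗ lmul v

/-- The q-difference equation `H_q(Φu) + Ψu + B(x⁻¹ u (h_q u)) = 0`. -/
def LHeq (q : ℂ) (u : PForm) (Φ Ψ B : Polynomial ℂ) : Prop :=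
  HqF q (mF Φ u) + mF Ψ u + mF B (divF 0 (cF u (hF q u))) = 0

/-- A form is regular when it possesses a MOPS. -/
def IsRegular (u : PForm) : Prop :=
  ∃ P : ℕ → Polynomial ℂ, (∀ n, (P n).Monic) ∧ (∀ n, (P n).natDegree = n) ∧
    (∀ n, u (P n * P n) ≠ 0) ∧ ∀ m n, m ≠ n → u (P m * P n) = 0

/-- A regular form is q-semiclassical when it satisfies `H_q(Φu) + Ψu = 0`, `Φ` monic. -/
def IsSemiclassical (q : ℂ) (u : PForm) : Prop :=
  IsRegular u ∧ ∃ Φ Ψ : Polynomial ℂ, Φ.Monic ∧ HqF q (mF Φ u) + mF Ψ u = 0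

/-- A regular form is q-Laguerre–Hahn when it satisfies some equation `LHeq`. -/
def IsLaguerreHahn (q : ℂ) (u : PForm) : Prop :=
  IsRegular u ∧ ∃ Φ Ψ B : Polynomial ℂ, Φ.Monic ∧ LHeq q u Φ Ψ B

/-- `u` is of class `s`: `s` is the minimum of `max (deg Ψ - 1) (max (deg Φ) (deg B) - 2)`
over all q-difference equations `LHeq q u Φ Ψ B` (`Φ` monic) satisfied by `u`. -/
def HasClass (q : ℂ) (u : PForm) (s : ℕ) : Prop :=
  (∃ Φ Ψ B : Polynomial ℂ, Φ.Monic ∧ LHeq q u Φ Ψ B ∧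
      Φ.natDegree ≤ s + 2 ∧ B.natDegree ≤ s + 2 ∧ Ψ.natDegree ≤ s + 1) ∧
  ∀ t : ℕ, (∃ Φ Ψ B : Polynomial ℂ, Φ.Monic ∧ LHeq q u Φ Ψ B ∧
      Φ.natDegree ≤ t + 2 ∧ B.natDegree ≤ t + 2 ∧ Ψ.natDegree ≤ t + 1) → s ≤ t

/-- Formal Stieltjes series `S(u)(z) = -∑ (u)_n z^{-n-1}`, as a formal Laurent
series in the variable `T = z⁻¹`. -/
def Sf (u : PForm) : LaurentSeries ℂ :=
  HahnSeries.ofPowerSeries ℤ ℂ (PowerSeries.mk fun n => if n = 0 then 0 else -u (X ^ (n - 1)))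

/-- A polynomial `f(z)`, viewed as a formal Laurent series in `T = z⁻¹`. -/
def toLS (f : Polynomial ℂ) : LaurentSeries ℂ :=
  ∑ j ∈ Finset.range (f.natDegree + 1), HahnSeries.single (-(j : ℤ)) (f.coeff j)

/-- The Laurent series `z` (in the variable `T = z⁻¹`). -/
def zLS : LaurentSeries ℂ := HahnSeries.single (-1 : ℤ) 1

/-- `(h_a F)(z) = F(az)` on formal Laurent series in `T = z⁻¹`. -/
def hLS (a : ℂ) (F : LaurentSeries ℂ) : LaurentSeries ℂ where
  coeff := fun k => a ^ (-k) * F.coeff k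
  isPWO_support' := F.isPWO_support'.mono fun k hk => by
    simp only [Function.mem_support] at hk ⊢
    exact fun h => hk (by rw [h, mul_zero])

/-- `(H_q F)(z) = (F(qz) - F(z))/((q-1)z)` on formal Laurent series in `T = z⁻¹`. -/
def HqLS (q : ℂ) (F : LaurentSeries ℂ) : LaurentSeries ℂ :=
  HahnSeries.single (1 : ℤ) ((q - 1)⁻¹) * (hLS q F - F)

/-! Writing every polynomial as `(x - cq) f + const`, the reduced functional `E'` is determined
by `E'((x - cq) f) = q E(f)` and `E'(1) = 0`, where `E = H_q(Φu) + Ψu + Bw` and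
`w = x⁻¹u(h_q u)`. The first identity comes from the q-Leibniz rule
`H_q((x - cq) f) = q (x - c) H_q f + f` together with the three divisions in the hypotheses;
the second from `H_q 1 = θ_{cq} 1 = 0`. Hence `E' = 0 ↔ E = 0` as soon as `q ≠ 0`. -/

theorem _root_.Polynomial.linearMap_eq_zero_of_apply_X_sub_C_mul {R M : Type*} [CommRing R]
    [AddCommGroup M] [Module R M] (L : R[X] →ₗ[R] M) (a : R) (h1 : L 1 = 0)
    (hmul : ∀ f, L ((X - C a) * f) = 0) : L = 0 := by
  refine LinearMap.ext fun g => ?_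
  rw [← modByMonic_add_div g (X - C a), modByMonic_X_sub_C_eq_C_eval,
    ← mul_one (C (g.eval a)), ← smul_eq_C_mul,
    map_add, map_smul, h1, hmul, smul_zero, zero_add, LinearMap.zero_apply]

theorem _root_.Polynomial.linearMap_eq_zero_iff_of_apply_X_sub_C_mul {K M : Type*} [Field K]
    [AddCommGroup M] [Module K M] {L L' : K[X] →ₗ[K] M} {a q : K} (hq : q ≠ 0)
    (h1 : L' 1 = 0) (hmul : ∀ f, L' ((X - C a) * f) = q • L f) : L = 0 ↔ L' = 0 := by
  constructor
  · intro h
    exact linearMap_eq_zero_of_apply_X_sub_C_mul L' a h1 fun f => by simp [hmul, h]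
  · intro h
    refine LinearMap.ext fun f => ?_
    simpa [h, hq] using (hmul f).symm

theorem X_sub_C_mul_thetaP (c : ℂ) (f : ℂ[X]) : (X - C c) * thetaP c f = f - C (f.eval c) :=
  mul_divByMonic_eq_iff_isRoot.mpr (by simp)

theorem thetaP_X_sub_C_mul (c : ℂ) (f : ℂ[X]) : thetaP c ((X - C c) * f) = f := by
  show ((X - C c) * f - C (((X - C c) * f).eval c)) /ₘ (X - C c) = f
  simp [mul_divByMonic_cancel_left f (monic_X_sub_C c)]

theorem thetaP_one (c : ℂ) : thetaP c 1 = 0 := by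
  show (1 - C ((1 : ℂ[X]).eval c)) /ₘ (X - C c) = 0
  simp

theorem hP_apply (a : ℂ) (f : ℂ[X]) : hP a f = f.comp (C a * X) := by
  simp [hP, aeval_def, comp, algebraMap_eq]

theorem hP_mul (a : ℂ) (f g : ℂ[X]) : hP a (f * g) = hP a f * hP a g := by
  simp [hP_apply, mul_comp]

theorem HqP_apply (q : ℂ) (f : ℂ[X]) : HqP q f = (q - 1)⁻¹ • thetaP 0 (hP q f - f) := rfl

theorem X_mul_HqP {q : ℂ} (hq : q ≠ 1) (f : ℂ[X]) : C (q - 1) * X * HqP q f = hP q f - f := by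
  have hroot := X_sub_C_mul_thetaP 0 (hP q f - f)
  simp only [map_zero, sub_zero, eval_sub, hP_apply, eval_comp, eval_mul, eval_C, eval_X,
    mul_zero, sub_self] at hroot
  have hunit : C (q - 1) * C (q - 1)⁻¹ = 1 := by
    rw [← C_mul, mul_inv_cancel₀ (sub_ne_zero.mpr hq), C_1]
  rw [HqP_apply, mul_smul_comm, smul_eq_C_mul, hP_apply]
  linear_combination hroot + X * thetaP 0 (f.comp (C q * X) - f) * hunit

theorem HqP_one (q : ℂ) : HqP q 1 = 0 := by
  simp [HqP_apply, hP_apply]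

theorem HqP_mul {q : ℂ} (hq : q ≠ 1) (f g : ℂ[X]) :
    HqP q (f * g) = hP q f * HqP q g + HqP q f * g := by
  refine mul_left_cancel₀ (mul_ne_zero (C_ne_zero.mpr (sub_ne_zero.mpr hq)) X_ne_zero) ?_
  have hf := X_mul_HqP hq f
  have hg := X_mul_HqP hq g
  rw [X_mul_HqP hq, hP_mul]
  linear_combination -hP q f * hg - g * hf

theorem HqP_X_sub_C {q : ℂ} (hq : q ≠ 1) (a : ℂ) : HqP q (X - C a) = 1 := by
  refine mul_left_cancel₀ (mul_ne_zero (C_ne_zero.mpr (sub_ne_zero.mpr hq)) X_ne_zero) ?_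
  rw [X_mul_HqP hq, hP_apply]
  simp only [sub_comp, X_comp, C_comp, map_sub, map_one]
  ring

theorem HqP_X_sub_C_mul {q : ℂ} (hq : q ≠ 1) (c : ℂ) (f : ℂ[X]) :
    HqP q ((X - C (c * q)) * f) = C q * (X - C c) * HqP q f + f := by
  rw [HqP_mul hq, HqP_X_sub_C hq, hP_apply]
  simp only [sub_comp, X_comp, C_comp]
  rw [C_mul]
  ring

section ReducedEquation

variable {q c rcq bcq : ℂ} {u w : PForm} {Φ Ψ B Φc Ψcq Bcq : ℂ[X]}

theorem reduced_apply_X_sub_C_mul (hq : q ≠ 1) (hΦ : Φ = (X - C c) * Φc)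
    (hΨ : C q * Ψ + Φc = (X - C (c * q)) * Ψcq + C rcq)
    (hB : C q * B = (X - C (c * q)) * Bcq + C bcq) (f : ℂ[X]) :
    (HqF q (mF Φc u) + mF Ψcq u + mF Bcq w + rcq • divF (c * q) u
        + bcq • divF (c * q) w - (u Ψcq + w Bcq) • deltaF (c * q)) ((X - C (c * q)) * f)
      = q • (HqF q (mF Φ u) + mF Ψ u + mF B w) f := by
  have hHq : Φc * HqP q ((X - C (c * q)) * f) = C q * (Φ * HqP q f) + Φc * f := by
    rw [HqP_X_sub_C_mul hq, hΦ]
    ring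
  have hΨf : Ψcq * ((X - C (c * q)) * f) = C q * (Ψ * f) + Φc * f - C rcq * f := by
    linear_combination (-f) * hΨ
  have hBf : Bcq * ((X - C (c * q)) * f) = C q * (B * f) - C bcq * f := by
    linear_combination (-f) * hB
  simp only [LinearMap.add_apply, LinearMap.sub_apply, LinearMap.smul_apply, LinearMap.neg_apply,
    LinearMap.comp_apply, HqF, mF, divF, deltaF, LinearMap.mulLeft_apply, leval_apply,
    thetaP_X_sub_C_mul, hHq, hΨf, hBf, ← smul_eq_C_mul, map_add, map_sub, map_smul, eval_mul,
    eval_sub, eval_X, eval_C, sub_self, zero_mul, smul_eq_mul]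
  ring

theorem reduced_apply_one :
    (HqF q (mF Φc u) + mF Ψcq u + mF Bcq w + rcq • divF (c * q) u
        + bcq • divF (c * q) w - (u Ψcq + w Bcq) • deltaF (c * q)) 1 = 0 := by
  simp [HqF, mF, divF, deltaF, HqP_one, thetaP_one]

end ReducedEquation

theorem reduction_lemma_general (q : ℂ) (hq0 : q ≠ 0) (hq : ∀ n : ℕ, 1 ≤ n → q ^ n ≠ 1)
    (u : PForm)
    (Φ Ψ B Φc Ψcq Bcq : Polynomial ℂ) (rcq bcq c : ℂ)
    (hΦ : Φ = (X - C c) * Φc)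
    (hΨ : C q * Ψ + Φc = (X - C (c * q)) * Ψcq + C rcq)
    (hB : C q * B = (X - C (c * q)) * Bcq + C bcq) :
    LHeq q u Φ Ψ B ↔
      HqF q (mF Φc u) + mF Ψcq u + mF Bcq (divF 0 (cF u (hF q u)))
        + rcq • divF (c * q) u + bcq • divF (c * q) (divF 0 (cF u (hF q u)))
        - (u Ψcq + (divF 0 (cF u (hF q u))) Bcq) • deltaF (c * q) = 0 := by
  have hq1 : q ≠ 1 := by simpa using hq 1 le_rfl
  exact linearMap_eq_zero_iff_of_apply_X_sub_C_mul hq0 reduced_apply_one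
    (reduced_apply_X_sub_C_mul hq1 hΦ hΨ hB)

/-- Lemma 5: equivalence between the q-difference equation and its
reduced version at a zero `c` of `Φ`. -/
theorem reduction_lemma (q : ℂ) (hq0 : q ≠ 0) (hq : ∀ n : ℕ, 1 ≤ n → q ^ n ≠ 1)
    (u : PForm) (hreg : IsRegular u)
    (Φ Ψ B Φc Ψcq Bcq : Polynomial ℂ) (rcq bcq c : ℂ) (hΦmonic : Φ.Monic)
    (hΦ : Φ = (X - C c) * Φc)
    (hΨ : C q * Ψ + Φc = (X - C (c * q)) * Ψcq + C rcq)
    (hB : C q * B = (X - C (c * q)) * Bcq + C bcq) :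
    LHeq q u Φ Ψ B ↔
      HqF q (mF Φc u) + mF Ψcq u + mF Bcq (divF 0 (cF u (hF q u)))
        + rcq • divF (c * q) u + bcq • divF (c * q) (divF 0 (cF u (hF q u)))
        - (u Ψcq + (divF 0 (cF u (hF q u))) Bcq) • deltaF (c * q) = 0 :=
  reduction_lemma_general q hq0 hq u Φ Ψ B Φc Ψcq Bcq rcq bcq c hΦ hΨ hB

end QLH

end
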